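/- arXiv:2509.12028 — 4 statements merged into one kernel-verified Lean document; each statement's English description precedes it below -/
import Mathlib

section
/- If L is an n×n real matrix such that L + Lᵀ is positive semidefinite, then every principal minor of L is nonnegative (i.e., L is a P₀-matrix). -/
open Matrix BigOperators

open Polynomial in
lemma eval_neg_charpoly_aux {m : Type*} [Fintype m] [DecidableEq m] (M : Matrix m m ℝ) (t : ℝ) :
    ((-M).charpoly).eval t = (M + t • 1).det := by
  rw [Matrix.charpoly, _root_.eval_det, Matrix.matPolyEquiv_charmatrix]
  simp [Matrix.scalar, add_comm, Polynomial.eval_sub]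
  congr 1
  ext i j
  simp [Matrix.diagonal, Matrix.one_apply, algebraMap, Matrix.smul_apply]

open Polynomial Filter in
lemma det_nonneg_of_symm_psd_aux {m : Type*} [Fintype m] [DecidableEq m] (M : Matrix m m ℝ)
    (h : (M + Mᵀ).PosSemidef) : 0 ≤ M.det := by
  have hne : ∀ t : ℝ, 0 < t → (M + t • 1).det ≠ 0 := by
    intro t ht hdet
    obtain ⟨v, hv, hMv⟩ := (Matrix.exists_mulVec_eq_zero_iff.mpr hdet)
    have h1 : v ⬝ᵥ (M + t • 1) *ᵥ v = 0 := by rw [hMv, dotProduct_zero]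
    have h2 : v ⬝ᵥ Mᵀ *ᵥ v = v ⬝ᵥ M *ᵥ v := by
      rw [dotProduct_mulVec, vecMul_transpose, dotProduct_comm]
    have h3 : 0 ≤ v ⬝ᵥ M *ᵥ v := by
      have := (posSemidef_iff_dotProduct_mulVec.mp h).2 v
      simp only [star_trivial, add_mulVec, dotProduct_add, h2] at this
      linarith
    have h4 : 0 < v ⬝ᵥ (t • (1:Matrix m m ℝ)) *ᵥ v := by
      rw [smul_mulVec, one_mulVec, dotProduct_smul]
      exact mul_pos ht (by simpa using (dotProduct_star_self_pos_iff (v := v)).mpr hv)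
    rw [add_mulVec, dotProduct_add] at h1
    linarith
  set p := (-M).charpoly with hp
  have hev : ∀ t : ℝ, p.eval t = (M + t • 1).det := fun t => eval_neg_charpoly_aux M t
  have hcont : Continuous fun t : ℝ => p.eval t := p.continuous
  have hpos : ∀ t : ℝ, 0 < t → 0 < p.eval t := by
    intro t ht
    by_contra hle
    push_neg at hle
    have hne' : p.eval t ≠ 0 := by rw [hev]; exact hne t ht
    have hlt : p.eval t < 0 := lt_of_le_of_ne hle hne'
    rcases eq_or_lt_of_le (Nat.zero_le (Fintype.card m)) with hc | hc
    · have : p = 1 := by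
        have : p.natDegree = 0 := by rw [hp, Matrix.charpoly_natDegree_eq_dim, ← hc]
        exact (Polynomial.Monic.natDegree_eq_zero ((-M).charpoly_monic)).mp this
      simp [this] at hlt; linarith
    · have hdeg : 0 < p.degree := by
        rw [hp, Matrix.charpoly_degree_eq_dim]
        exact_mod_cast hc
      have htop := Polynomial.tendsto_atTop_of_leadingCoeff_nonneg p hdeg
        (by rw [hp, ((-M).charpoly_monic).leadingCoeff]; norm_num)
      obtain ⟨t1, ht1⟩ := (htop.eventually_ge_atTop 1).exists_forall_of_atTop
      set t2 := max t1 (t + 1) with ht2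
      have hpt2 : 0 < p.eval t2 := lt_of_lt_of_le one_pos (ht1 t2 (le_max_left _ _))
      have htt2 : t < t2 := lt_of_lt_of_le (by linarith) (le_max_right _ _)
      obtain ⟨c, hc1, hc2⟩ := intermediate_value_Icc htt2.le (hcont.continuousOn)
        (Set.mem_Icc.mpr ⟨hlt.le, hpt2.le⟩)
      exact hne c (lt_of_lt_of_le ht hc1.1) (by rw [← hev]; exact hc2)
  have h0 : M.det = p.eval 0 := by rw [hev]; simp
  rw [h0]
  have htend : Filter.Tendsto (fun t : ℝ => p.eval t) (nhdsWithin 0 (Set.Ioi 0)) (nhds (p.eval 0)) :=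
    (hcont.tendsto 0).mono_left nhdsWithin_le_nhds
  refine ge_of_tendsto htend ?_
  filter_upwards [self_mem_nhdsWithin] with t ht
  exact (hpos t ht).le

noncomputable def principalSub {n : ℕ} (L : Matrix (Fin n) (Fin n) ℝ) (e : Finset (Fin n)) :
    Matrix e e ℝ :=
  L.submatrix (fun i : e => (i : Fin n)) (fun i : e => (i : Fin n))

/-- If `L + Lᵀ` is positive semidefinite, then every principal minor of `L` is nonnegative,
i.e. `L` is a `P₀`-matrix. -/
theorem principalMinor_nonneg_of_posSemidef_symm_part {n : ℕ} (L : Matrix (Fin n) (Fin n) ℝ)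
    (h : (L + Lᵀ).PosSemidef) :
    ∀ e : Finset (Fin n), 0 ≤ (principalSub L e).det := by
  intro e
  apply det_nonneg_of_symm_psd_aux
  have := h.submatrix (fun i : e => (i : Fin n))
  have heq : (principalSub L e) + (principalSub L e)ᵀ
      = (L + Lᵀ).submatrix (fun i : e => (i : Fin n)) (fun i : e => (i : Fin n)) := by
    ext i j
    simp [principalSub, Matrix.submatrix, Matrix.transpose_apply]
  rw [heq]
  exact this
end

section
/- Let L be an n×n symmetric positive semidefinite matrix with marginal kernel K = I − (L+I)⁻¹, and let e₁, e₂ ⊆ {1,...,n} be disjoint subsets. Then Cov(1(e₁ ⊆ E), 1(e₂ ⊆ E)) = det(K_{e₁∪e₂}) − det(K_{e₁})·det(K_{e₂}) ≤ 0 (negative association of the DPP). -/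
open Matrix BigOperators

noncomputable def dppProb {n : ℕ} (L : Matrix (Fin n) (Fin n) ℝ) (e : Finset (Fin n)) : ℝ :=
  (principalSub L e).det / (L + 1).det


variable {m m' : Type*} [Fintype m] [DecidableEq m] [Fintype m'] [DecidableEq m']

lemma psd_det_nonneg {M : Matrix m m ℝ} (h : M.PosSemidef) : 0 ≤ M.det := by
  rw [h.1.det_eq_prod_eigenvalues]
  exact Finset.prod_nonneg fun i _ => by exact_mod_cast h.eigenvalues_nonneg i

lemma one_le_det_one_add {M : Matrix m m ℝ} (h : M.PosSemidef) : 1 ≤ (1 + M).det := by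
  have hs := h.1.spectral_theorem
  set U : Matrix m m ℝ := (h.1.eigenvectorUnitary : Matrix m m ℝ) with hUdef
  have hU : U * star U = 1 := Matrix.mem_unitaryGroup_iff.mp h.1.eigenvectorUnitary.2
  have h1 : (1 : Matrix m m ℝ) + M
      = U * (1 + diagonal (RCLike.ofReal ∘ h.1.eigenvalues)) * star U := by
    rw [Matrix.mul_add, Matrix.add_mul, Matrix.mul_one, hU]
    conv_lhs => rw [hs, Unitary.conjStarAlgAut_apply]
  have hU2 : star U * U = 1 := Matrix.mem_unitaryGroup_iff'.mp h.1.eigenvectorUnitary.2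
  rw [h1, det_mul, det_mul, mul_comm, ← mul_assoc, ← det_mul, hU2, det_one, one_mul]
  have : (1 : Matrix m m ℝ) + diagonal (RCLike.ofReal ∘ h.1.eigenvalues)
      = diagonal (fun i => 1 + h.1.eigenvalues i) := by
    rw [← diagonal_one, diagonal_add]
    rfl
  rw [this, det_diagonal]
  calc (1:ℝ) = ∏ _i : m, 1 := by simp
    _ ≤ ∏ i : m, (1 + h.1.eigenvalues i) :=
      Finset.prod_le_prod (fun i _ => zero_le_one)
        (fun i _ => by linarith [h.eigenvalues_nonneg i])

lemma det_le_det_add {A B : Matrix m m ℝ} (hA : A.PosSemidef) (hB : B.PosSemidef) :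
    A.det ≤ (A + B).det := by
  by_cases hd : A.det = 0
  · rw [hd]; exact psd_det_nonneg (hA.add hB)
  · set S := (open MatrixOrder in CFC.sqrt A) with hSdef
    have hSS : S * S = A := (open MatrixOrder in CFC.sqrt_mul_sqrt_self A hA.nonneg)
    have hSh : S.IsHermitian := (open MatrixOrder in (CFC.sqrt_nonneg A).posSemidef.1)
    have hdS : S.det ≠ 0 := by
      intro h0
      rw [← hSS, det_mul, h0, mul_zero] at hd
      exact hd rfl
    have hSinv : S * S⁻¹ = 1 := mul_nonsing_inv _ (isUnit_iff_ne_zero.mpr hdS)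
    have hSinv' : S⁻¹ * S = 1 := nonsing_inv_mul _ (isUnit_iff_ne_zero.mpr hdS)
    have hSih : (S⁻¹)ᴴ = S⁻¹ := hSh.inv
    have hBt : (S⁻¹ * B * (S⁻¹)ᴴ).PosSemidef := hB.mul_mul_conjTranspose_same S⁻¹
    have key : A + B = S * (1 + S⁻¹ * B * (S⁻¹)ᴴ) * S := by
      rw [Matrix.mul_add, Matrix.mul_one, Matrix.add_mul, hSS, hSih]
      congr 1
      symm
      calc S * (S⁻¹ * B * S⁻¹) * S = (S * S⁻¹) * B * (S⁻¹ * S) := by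
            simp only [Matrix.mul_assoc]
        _ = B := by rw [hSinv, hSinv', Matrix.one_mul, Matrix.mul_one]
    calc A.det = S.det * 1 * S.det := by rw [mul_one, ← det_mul, hSS]
      _ ≤ S.det * (1 + S⁻¹ * B * (S⁻¹)ᴴ).det * S.det := by
          have h1 := one_le_det_one_add hBt
          have h2 : 0 ≤ S.det * S.det := by
            have : S.det * S.det = A.det := by rw [← det_mul, hSS]
            rw [this]
            exact psd_det_nonneg hA
          nlinarith
      _ = (A + B).det := by rw [key, det_mul, det_mul]

lemma fischer {M : Matrix (m ⊕ m') (m ⊕ m') ℝ} (h : M.PosSemidef) :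
    M.det ≤ (M.toBlocks₁₁).det * (M.toBlocks₂₂).det := by
  set A := M.toBlocks₁₁ with hAdef
  set B := M.toBlocks₁₂ with hBdef
  set C := M.toBlocks₂₁ with hCdef
  set D := M.toBlocks₂₂ with hDdef
  have hA : A.PosSemidef := h.submatrix Sum.inl
  have hD : D.PosSemidef := h.submatrix Sum.inr
  have hMfb : M = fromBlocks A B C D := (fromBlocks_toBlocks M).symm
  have hCB : C = Bᴴ := by
    ext i j
    have := congrFun (congrFun h.1 (Sum.inr i)) (Sum.inl j)
    simpa [conjTranspose_apply, hCdef, hBdef, toBlocks₂₁, toBlocks₁₂] using this.symm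
  by_cases hdA : A.det = 0
  · have : M.det = 0 := by
      obtain ⟨x, hx, hAx⟩ := (Matrix.exists_mulVec_eq_zero_iff).mpr hdA
      apply (Matrix.exists_mulVec_eq_zero_iff).mp
      refine ⟨Sum.elim x 0, ?_, ?_⟩
      · intro hcon
        apply hx
        ext i
        exact congrFun hcon (Sum.inl i)
      · have hq : star (Sum.elim x 0) ⬝ᵥ M *ᵥ Sum.elim x 0 = 0 := by
          rw [hMfb, fromBlocks_mulVec]
          simp [dotProduct, Fintype.sum_sum_type, hAx]
        exact (h.dotProduct_mulVec_zero_iff _).mp hq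
    rw [this]
    exact mul_nonneg (psd_det_nonneg hA) (psd_det_nonneg hD)
  · have hApd : A.PosDef := by
      refine posDef_iff_dotProduct_mulVec.mpr ⟨hA.1, fun x hx => ?_⟩
      rcases lt_or_eq_of_le (hA.dotProduct_mulVec_nonneg x) with h' | h'
      · exact h'
      · exfalso
        apply hdA
        apply (Matrix.exists_mulVec_eq_zero_iff).mp
        exact ⟨x, hx, (hA.dotProduct_mulVec_zero_iff x).mp h'.symm⟩
    have : Invertible A := A.invertibleOfIsUnitDet (isUnit_iff_ne_zero.mpr hdA)
    have hSchur : (D - Bᴴ * A⁻¹ * B).PosSemidef := by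
      rw [← Matrix.PosDef.fromBlocks₁₁ B D hApd, ← hCB, ← hMfb]
      exact h
    have hS : (Bᴴ * A⁻¹ * B).PosSemidef := by
      have := (hApd.inv.posSemidef).conjTranspose_mul_mul_same B
      exact this
    have hdet : M.det = A.det * (D - Bᴴ * A⁻¹ * B).det := by
      rw [hMfb, hCB, det_fromBlocks₁₁, invOf_eq_nonsing_inv]
    rw [hdet]
    apply mul_le_mul_of_nonneg_left _ (le_of_lt hApd.det_pos)
    have : (D - Bᴴ * A⁻¹ * B) + Bᴴ * A⁻¹ * B = D := sub_add_cancel _ _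
    calc (D - Bᴴ * A⁻¹ * B).det ≤ ((D - Bᴴ * A⁻¹ * B) + Bᴴ * A⁻¹ * B).det :=
          det_le_det_add hSchur hS
      _ = D.det := by rw [this]

noncomputable def finsetSumEquiv {n : ℕ} (e₁ e₂ : Finset (Fin n)) (h : Disjoint e₁ e₂) :
    (↥e₁ ⊕ ↥e₂) ≃ ↥(e₁ ∪ e₂) where
  toFun := Sum.elim (fun x => ⟨x.1, Finset.mem_union_left _ x.2⟩)
    (fun x => ⟨x.1, Finset.mem_union_right _ x.2⟩)
  invFun := fun y => if hy : (y : Fin n) ∈ e₁ then Sum.inl ⟨y, hy⟩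
    else Sum.inr ⟨y, (Finset.mem_union.mp y.2).resolve_left hy⟩
  left_inv := by
    rintro (x | x)
    · simp
    · have : (x : Fin n) ∉ e₁ := Finset.disjoint_right.mp h x.2
      simp [this]
  right_inv := fun y => by
    by_cases hy : (y : Fin n) ∈ e₁ <;> simp [hy]

lemma finsetSumEquiv_coe {n : ℕ} (e₁ e₂ : Finset (Fin n)) (h : Disjoint e₁ e₂)
    (x : ↥e₁ ⊕ ↥e₂) :
    ((finsetSumEquiv e₁ e₂ h x : ↥(e₁ ∪ e₂)) : Fin n) = Sum.elim (↑) (↑) x := by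
  rcases x with x | x <;> rfl

lemma K_posSemidef {n : ℕ} (L : Matrix (Fin n) (Fin n) ℝ) (hL : L.PosSemidef)
    (K : Matrix (Fin n) (Fin n) ℝ) (hK : K = 1 - (L + 1)⁻¹) : K.PosSemidef := by
  have hL1 : (L + 1).PosDef := Matrix.PosDef.posSemidef_add hL Matrix.PosDef.one
  have hu : IsUnit (L + 1).det := isUnit_iff_ne_zero.mpr (ne_of_gt hL1.det_pos)
  have hinv1 : (L + 1)⁻¹ * (L + 1) = 1 := nonsing_inv_mul _ hu
  have hinv2 : (L + 1) * (L + 1)⁻¹ = 1 := mul_nonsing_inv _ hu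
  have hKL : K = (L + 1)⁻¹ * L := by
    have h' : (L + 1)⁻¹ * (L + 1) - (L + 1)⁻¹ * 1 = (L + 1)⁻¹ * L := by
      rw [Matrix.mul_one, Matrix.mul_add, Matrix.mul_one, add_sub_cancel_right]
    rw [hK, ← h', hinv1, Matrix.mul_one]
  have hih : ((L + 1)⁻¹)ᴴ = (L + 1)⁻¹ := hL1.1.inv
  have hK2 : K = (L + 1)⁻¹ * (L * L + L) * ((L + 1)⁻¹)ᴴ := by
    rw [hih, hKL]
    have : L * L + L = L * (L + 1) := by rw [Matrix.mul_add, Matrix.mul_one]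
    rw [this]
    calc (L + 1)⁻¹ * L = (L + 1)⁻¹ * L * ((L + 1) * (L + 1)⁻¹) := by
          rw [hinv2, Matrix.mul_one]
      _ = (L + 1)⁻¹ * (L * (L + 1)) * (L + 1)⁻¹ := by simp only [Matrix.mul_assoc]
  have hLL : (L * L + L).PosSemidef := by
    have h1 : (Lᴴ * L).PosSemidef := posSemidef_conjTranspose_mul_self L
    rw [hL.1] at h1
    exact h1.add hL
  rw [hK2]
  exact hLL.mul_mul_conjTranspose_same _

/-- Negative association for DPPs with symmetric PSD kernel: for disjoint subsets `e₁, e₂`,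
`Cov(1(e₁ ⊆ E), 1(e₂ ⊆ E)) = det(K_{e₁∪e₂}) - det(K_{e₁})·det(K_{e₂}) ≤ 0`, where
`K = I - (L+I)⁻¹` is the marginal kernel satisfying `P(e ⊆ E) = det(K_e)`. -/
theorem dpp_negative_association {n : ℕ} (L : Matrix (Fin n) (Fin n) ℝ)
    (hL : L.PosSemidef) (K : Matrix (Fin n) (Fin n) ℝ) (hK : K = 1 - (L + 1)⁻¹)
    (hmarg : ∀ e : Finset (Fin n),
      ∑ e' ∈ (Finset.univ : Finset (Fin n)).powerset.filter (fun e' => e ⊆ e'), dppProb L e'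
        = (principalSub K e).det)
    (e₁ e₂ : Finset (Fin n)) (hdisj : Disjoint e₁ e₂) :
    (∑ e ∈ (Finset.univ : Finset (Fin n)).powerset.filter (fun e => e₁ ⊆ e ∧ e₂ ⊆ e),
        dppProb L e)
      - (∑ e ∈ (Finset.univ : Finset (Fin n)).powerset.filter (fun e => e₁ ⊆ e), dppProb L e) *
        (∑ e ∈ (Finset.univ : Finset (Fin n)).powerset.filter (fun e => e₂ ⊆ e), dppProb L e)
      = (principalSub K (e₁ ∪ e₂)).det - (principalSub K e₁).det * (principalSub K e₂).det ∧
    (principalSub K (e₁ ∪ e₂)).det - (principalSub K e₁).det * (principalSub K e₂).det ≤ 0 := by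
  classical
  have hKpsd := K_posSemidef L hL K hK
  have hfilter : Finset.filter (fun e => e₁ ⊆ e ∧ e₂ ⊆ e) (Finset.univ : Finset (Fin n)).powerset
      = Finset.filter (fun e => e₁ ∪ e₂ ⊆ e) (Finset.univ : Finset (Fin n)).powerset := by
    apply Finset.filter_congr
    intro x _
    simp [Finset.union_subset_iff]
  set σ := finsetSumEquiv e₁ e₂ hdisj with hσdef
  set i : ↥e₁ ⊕ ↥e₂ → Fin n := Sum.elim (↑) (↑) with hidef
  have hMpsd : (K.submatrix i i).PosSemidef := hKpsd.submatrix i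
  have hfis := fischer hMpsd
  have hB11 : (K.submatrix i i).toBlocks₁₁ = principalSub K e₁ := rfl
  have hB22 : (K.submatrix i i).toBlocks₂₂ = principalSub K e₂ := rfl
  have hcoe : ∀ y : ↥(e₁ ∪ e₂), i (σ.symm y) = (y : Fin n) := fun y => by
    have h' := finsetSumEquiv_coe e₁ e₂ hdisj (σ.symm y)
    rw [← hσdef, Equiv.apply_symm_apply] at h'
    exact h'.symm
  have hdetU : (principalSub K (e₁ ∪ e₂)).det = (K.submatrix i i).det := by
    have heq : principalSub K (e₁ ∪ e₂) = (K.submatrix i i).submatrix σ.symm σ.symm := by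
      ext a b
      simp only [principalSub, submatrix_apply, submatrix_submatrix, Function.comp_apply,
        hcoe a, hcoe b]
    rw [heq, det_submatrix_equiv_self]
  refine ⟨?_, ?_⟩
  · rw [hfilter, hmarg, hmarg, hmarg]
  · rw [hdetU]
    rw [hB11, hB22] at hfis
    linarith
end

section
/- For a determinantal point process with kernel L (with L + I invertible) and marginal kernel K = I − (L+I)⁻¹, the marginal probability that index i belongs to a random subset E equals K_{ii}, i.e., Σ_{e ⊆ [n], i ∈ e} det(L_e)/det(L+I) = K_{ii}. -/
open Matrix BigOperators

lemma piecewise_det {n : ℕ} (M : Matrix (Fin n) (Fin n) ℝ) (s : Finset (Fin n)) :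
    (Matrix.of (s.piecewise M (1 : Matrix (Fin n) (Fin n) ℝ))).det = (principalSub M s).det := by
  have hzero : ∀ a, ¬ a ∈ s → ∀ b, b ∈ s →
      (Matrix.of (s.piecewise M (1 : Matrix (Fin n) (Fin n) ℝ))) a b = 0 := by
    intro a ha b hb
    simp only [Matrix.of_apply]; refine (congrFun (Finset.piecewise_eq_of_notMem _ _ _ ha) b).trans ?_
    exact Matrix.one_apply_ne fun hc : a = b => ha (hc ▸ hb)
  have h1 : ((Matrix.of (s.piecewise M (1 : Matrix (Fin n) (Fin n) ℝ))).toSquareBlockProp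
      (fun i => i ∈ s)) = principalSub M s := by
    ext a b
    simp only [Matrix.toSquareBlockProp, Matrix.toBlock_apply, Matrix.of_apply, principalSub,
      Matrix.submatrix_apply]
    exact congrFun (Finset.piecewise_eq_of_mem _ _ _ a.2) _
  have h2 : ((Matrix.of (s.piecewise M (1 : Matrix (Fin n) (Fin n) ℝ))).toSquareBlockProp
      (fun i => ¬ i ∈ s)) = 1 := by
    ext a b
    have ha : ¬ (a : Fin n) ∈ s := a.2
    simp only [Matrix.toSquareBlockProp, Matrix.toBlock_apply, Matrix.of_apply]
    refine (congrFun (Finset.piecewise_eq_of_notMem _ _ _ ha) _).trans ?_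
    simp [Matrix.one_apply, Subtype.ext_iff]
  rw [Matrix.twoBlockTriangular_det _ (fun i => i ∈ s) hzero, h1, h2, Matrix.det_one, mul_one]
  all_goals congr!

lemma det_add_one_expand {n : ℕ} (M : Matrix (Fin n) (Fin n) ℝ) :
    (M + 1).det = ∑ e : Finset (Fin n), (principalSub M e).det := by
  have h := (Matrix.detRowAlternating (R := ℝ) (n := Fin n)).toMultilinearMap.map_add_univ
    M (1 : Matrix (Fin n) (Fin n) ℝ)
  calc (M + 1).det = Matrix.detRowAlternating (M + (1 : Matrix (Fin n) (Fin n) ℝ)) := rfl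
    _ = ∑ s : Finset (Fin n),
        Matrix.detRowAlternating (s.piecewise M (1 : Matrix (Fin n) (Fin n) ℝ)) := h
    _ = ∑ e : Finset (Fin n), (principalSub M e).det :=
        Finset.sum_congr rfl fun s _ => piecewise_det M s

/-- For a DPP with kernel `L` (with `L + I` invertible) and marginal kernel `K = I - (L+I)⁻¹`,
the marginal probability that `i` belongs to a random subset equals `K i i`. -/
theorem dpp_marginal_single {n : ℕ} (L : Matrix (Fin n) (Fin n) ℝ)
    (hdet : IsUnit (L + 1).det) (K : Matrix (Fin n) (Fin n) ℝ) (hK : K = 1 - (L + 1)⁻¹)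
    (i : Fin n) :
    ∑ e ∈ (Finset.univ : Finset (Fin n)).powerset.filter (fun e => i ∈ e),
      (principalSub L e).det / (L + 1).det = K i i := by
  have hD : (L + 1).det ≠ 0 := hdet.ne_zero
  set L' : Matrix (Fin n) (Fin n) ℝ := L.updateRow i 0 with hL'
  have hfilter : ∑ e ∈ (Finset.univ : Finset (Fin n)).powerset.filter (fun e => ¬ i ∈ e),
      (principalSub L e).det = (L' + 1).det := by
    rw [det_add_one_expand, ← Finset.powerset_univ,
      ← Finset.sum_filter_add_sum_filter_not _ (fun e => ¬ i ∈ e)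
        (fun e => (principalSub L' e).det)]
    have h2 : ∑ e ∈ (Finset.univ : Finset (Fin n)).powerset.filter (fun e => ¬¬ i ∈ e),
        (principalSub L' e).det = 0 := by
      apply Finset.sum_eq_zero
      intro e he
      simp only [Finset.mem_filter, not_not] at he
      apply Matrix.det_eq_zero_of_row_eq_zero ⟨i, he.2⟩
      intro j
      simp [principalSub, hL']
    rw [h2, add_zero]
    apply Finset.sum_congr rfl
    intro e he
    simp only [Finset.mem_filter] at he
    congr 1
    ext a b
    have hai : (a : Fin n) ≠ i := fun hc => he.2 (hc ▸ a.2)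
    simp [principalSub, hL', Matrix.updateRow_ne hai]
  have hall : ∑ e ∈ (Finset.univ : Finset (Fin n)).powerset, (principalSub L e).det
      = (L + 1).det := by
    rw [Finset.powerset_univ, ← det_add_one_expand]
  have hadj : (L + 1).adjugate i i = (L' + 1).det := by
    rw [Matrix.adjugate_apply]
    congr 1
    ext a b
    rcases eq_or_ne a i with h | h
    · subst h
      simp [hL', Matrix.updateRow_self, Matrix.add_apply, Pi.single_apply, Matrix.one_apply,
        eq_comm]
    · simp [hL', Matrix.updateRow_ne h, Matrix.add_apply]
  have hsplit : ∑ e ∈ (Finset.univ : Finset (Fin n)).powerset.filter (fun e => i ∈ e),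
      (principalSub L e).det = (L + 1).det - (L' + 1).det := by
    have hsum := Finset.sum_filter_add_sum_filter_not
      ((Finset.univ : Finset (Fin n)).powerset) (fun e => i ∈ e)
      (fun e => (principalSub L e).det)
    rw [hall] at hsum
    rw [← hsum, ← hfilter]
    ring
  have hinv : (L + 1)⁻¹ i i = ((L + 1).det)⁻¹ * (L' + 1).det := by
    rw [Matrix.inv_def, Matrix.smul_apply, hadj, Ring.inverse_eq_inv, smul_eq_mul]
  rw [hK]
  simp only [Matrix.sub_apply, Matrix.one_apply_eq, hinv]
  rw [← Finset.sum_div, hsplit]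
  field_simp
end

section
/- Suppose L₁ = SL₂S for some diagonal S with ±1 entries, where L_k = B_kV_kV_kᵀB_k + γ_kB_kV_kC_kV_kᵀB_k + B_k² with B_k diagonal with positive entries, V_k ∈ ℝ^{n×d} full rank with unit-norm rows, C_k skew-symmetric with Frobenius norm 1, and γ_k > 0. Then B₁ = B₂. (Hint: comparing the symmetric parts gives B₁V₁V₁ᵀB₁ + B₁² = S(B₂V₂V₂ᵀB₂ + B₂²)S, and diagonal entries give 2β_{1,i}² = 2β_{2,i}².) -/
open Matrix BigOperators

lemma skew_quad_aux {d : ℕ} (C : Matrix (Fin d) (Fin d) ℝ) (hC : Cᵀ = -C) (x : Fin d → ℝ) :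
    ∑ j, ∑ k, x j * C j k * x k = 0 := by
  have h : ∀ j k, C j k = -C k j := by
    intro j k
    have := congrFun (congrFun hC k) j
    simpa [Matrix.transpose_apply] using this
  have h2 : (∑ j, ∑ k, x j * C j k * x k) = -(∑ j, ∑ k, x j * C j k * x k) := by
    conv_lhs => rw [Finset.sum_comm]
    rw [← Finset.sum_neg_distrib]
    refine Finset.sum_congr rfl fun j _ => ?_
    rw [← Finset.sum_neg_distrib]
    refine Finset.sum_congr rfl fun k _ => ?_
    rw [h k j]; ring
  linarith

lemma diag_entry_aux {n d : ℕ} (β : Fin n → ℝ)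
    (V : Matrix (Fin n) (Fin d) ℝ) (hV : ∀ i, ∑ j, V i j ^ 2 = 1)
    (C : Matrix (Fin d) (Fin d) ℝ) (hC : Cᵀ = -C) (γ : ℝ) (i : Fin n) :
    (Matrix.diagonal β * V * Vᵀ * Matrix.diagonal β
      + γ • (Matrix.diagonal β * V * C * Vᵀ * Matrix.diagonal β)
      + Matrix.diagonal β * Matrix.diagonal β) i i = 2 * β i ^ 2 := by
  have h1 : (Matrix.diagonal β * V * Vᵀ * Matrix.diagonal β) i i = β i ^ 2 := by
    have e : (Matrix.diagonal β * V * Vᵀ * Matrix.diagonal β) i i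
        = β i ^ 2 * ∑ j, V i j ^ 2 := by
      simp only [Matrix.mul_apply, Matrix.diagonal, Matrix.transpose_apply,
        Matrix.of_apply, ite_mul, zero_mul, Finset.sum_ite_eq, Finset.mem_univ, if_pos,
        Finset.mul_sum]
      simp [Finset.mul_sum]
      rw [Finset.sum_mul]
      exact Finset.sum_congr rfl fun j _ => by ring
    rw [e, hV i, mul_one]
  have h2 : (Matrix.diagonal β * V * C * Vᵀ * Matrix.diagonal β) i i = 0 := by
    have e : (Matrix.diagonal β * V * C * Vᵀ * Matrix.diagonal β) i i
        = β i ^ 2 * ∑ j, ∑ k, V i j * C j k * V i k := by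
      simp [Matrix.mul_apply, Matrix.diagonal, Finset.mul_sum]
      rw [Finset.sum_mul]
      conv_rhs => rw [Finset.sum_comm]
      refine Finset.sum_congr rfl fun k _ => ?_
      rw [Finset.sum_mul, Finset.sum_mul]
      refine Finset.sum_congr rfl fun j _ => ?_
      ring
    rw [e, skew_quad_aux C hC, mul_zero]
  have h3 : (Matrix.diagonal β * Matrix.diagonal β) i i = β i ^ 2 := by
    simp [Matrix.mul_apply, Matrix.diagonal_apply, pow_two]
  simp only [Matrix.add_apply, Matrix.smul_apply, h1, h2, h3, smul_eq_mul, mul_zero]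
  ring

/-- If two NDPP kernels satisfy `L₁ = SL₂S` for a sign matrix `S`, then the popularity
matrices agree: `B₁ = B₂`. -/
theorem ndpp_identifiability_B {n d : ℕ}
    (β₁ β₂ : Fin n → ℝ) (hβ₁ : ∀ i, 0 < β₁ i) (hβ₂ : ∀ i, 0 < β₂ i)
    (V₁ V₂ : Matrix (Fin n) (Fin d) ℝ)
    (hV₁ : ∀ i, ∑ j, V₁ i j ^ 2 = 1) (hV₂ : ∀ i, ∑ j, V₂ i j ^ 2 = 1)
    (hV₁rank : V₁.rank = d) (hV₂rank : V₂.rank = d)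
    (C₁ C₂ : Matrix (Fin d) (Fin d) ℝ) (hC₁ : C₁ᵀ = -C₁) (hC₂ : C₂ᵀ = -C₂)
    (hC₁norm : ∑ i, ∑ j, C₁ i j ^ 2 = 1) (hC₂norm : ∑ i, ∑ j, C₂ i j ^ 2 = 1)
    (γ₁ γ₂ : ℝ) (hγ₁ : 0 < γ₁) (hγ₂ : 0 < γ₂)
    (B₁ B₂ : Matrix (Fin n) (Fin n) ℝ)
    (hB₁ : B₁ = Matrix.diagonal β₁) (hB₂ : B₂ = Matrix.diagonal β₂)
    (L₁ L₂ : Matrix (Fin n) (Fin n) ℝ)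
    (hL₁ : L₁ = B₁ * V₁ * V₁ᵀ * B₁ + γ₁ • (B₁ * V₁ * C₁ * V₁ᵀ * B₁) + B₁ * B₁)
    (hL₂ : L₂ = B₂ * V₂ * V₂ᵀ * B₂ + γ₂ • (B₂ * V₂ * C₂ * V₂ᵀ * B₂) + B₂ * B₂)
    (s : Fin n → ℝ) (hs : ∀ i, s i = 1 ∨ s i = -1)
    (S : Matrix (Fin n) (Fin n) ℝ) (hS : S = Matrix.diagonal s)
    (hLeq : L₁ = S * L₂ * S) :
    B₁ = B₂ := by
  subst hB₁ hB₂ hL₁ hL₂ hS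
  have key : ∀ i : Fin n, β₁ i = β₂ i := by
    intro i
    have h := congrFun (congrFun hLeq i) i
    have e1 := diag_entry_aux β₁ V₁ hV₁ C₁ hC₁ γ₁ i
    have e2 := diag_entry_aux β₂ V₂ hV₂ C₂ hC₂ γ₂ i
    have hSentry : (Matrix.diagonal s *
        (Matrix.diagonal β₂ * V₂ * V₂ᵀ * Matrix.diagonal β₂
          + γ₂ • (Matrix.diagonal β₂ * V₂ * C₂ * V₂ᵀ * Matrix.diagonal β₂)
          + Matrix.diagonal β₂ * Matrix.diagonal β₂) * Matrix.diagonal s) i i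
        = s i * (2 * β₂ i ^ 2) * s i := by
      rw [Matrix.mul_diagonal, Matrix.diagonal_mul, e2]
    rw [e1, hSentry] at h
    have hsi : s i * s i = 1 := by rcases hs i with h' | h' <;> rw [h'] <;> norm_num
    have hsq : β₁ i ^ 2 = β₂ i ^ 2 := by nlinarith
    have := hβ₁ i; have := hβ₂ i
    nlinarith
  rw [show β₁ = β₂ from funext key]
end
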